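/- The function h₁(α) := ((α−3)(α−4)/(12α)) · 2^{−α} − α/24 is strictly decreasing on the interval [1,2], and the equation h₁(α) = 0 has a unique solution α₁ in [1,2]; moreover α₁ lies in the open interval (1.55, 1.56). -/
import Mathlib

noncomputable def h₁ (α : ℝ) : ℝ := ((α - 3)*(α - 4)/(12*α)) * (2 : ℝ) ^ (-α) - α/24

lemma pow155 : (2:ℝ) ^ ((1.55:ℝ)) < 2.957 := by
  have h20 : ((2:ℝ) ^ ((1.55:ℝ))) ^ (20:ℕ) = 2 ^ (31:ℕ) := by
    rw [← Real.rpow_natCast ((2:ℝ) ^ ((1.55:ℝ))) 20, ← Real.rpow_mul (by norm_num),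
      ← Real.rpow_natCast 2 31]
    norm_num
  apply lt_of_pow_lt_pow_left₀ 20 (by norm_num)
  rw [h20]; norm_num

lemma pow156 : (2.888:ℝ) < (2:ℝ) ^ ((1.56:ℝ)) := by
  have h25 : ((2:ℝ) ^ ((1.56:ℝ))) ^ (25:ℕ) = 2 ^ (39:ℕ) := by
    rw [← Real.rpow_natCast ((2:ℝ) ^ ((1.56:ℝ))) 25, ← Real.rpow_mul (by norm_num),
      ← Real.rpow_natCast 2 39]
    norm_num
  apply lt_of_pow_lt_pow_left₀ 25 (Real.rpow_nonneg (by norm_num) _)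
  rw [h25]; norm_num

lemma h155 : 0 < h₁ 1.55 := by
  have hp : (0:ℝ) < (2:ℝ) ^ ((1.55:ℝ)) := Real.rpow_pos_of_pos (by norm_num) _
  have hb : (2.957:ℝ)⁻¹ < (2:ℝ) ^ (-(1.55:ℝ)) := by
    rw [Real.rpow_neg (by norm_num)]
    exact inv_strictAnti₀ hp pow155
  unfold h₁
  nlinarith [hb]

lemma h156 : h₁ 1.56 < 0 := by
  have hp : (0:ℝ) < (2:ℝ) ^ ((1.56:ℝ)) := Real.rpow_pos_of_pos (by norm_num) _
  have hb : (2:ℝ) ^ (-(1.56:ℝ)) < (2.888:ℝ)⁻¹ := by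
    rw [Real.rpow_neg (by norm_num)]
    exact inv_strictAnti₀ (by norm_num) pow156
  have hb0 : (0:ℝ) < (2:ℝ) ^ (-(1.56:ℝ)) := Real.rpow_pos_of_pos (by norm_num) _
  unfold h₁
  nlinarith [hb, hb0]

lemma h₁_anti : StrictAntiOn h₁ (Set.Icc 1 2) := by
  intro x hx y hy hxy
  obtain ⟨hx1, hx2⟩ := hx
  obtain ⟨hy1, hy2⟩ := hy
  have hx0 : (0:ℝ) < x := by linarith
  have hy0 : (0:ℝ) < y := by linarith
  have hfy : 0 < (y - 3)*(y - 4)/(12*y) := by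
    apply div_pos (by nlinarith) (by linarith)
  have hfxy : (y - 3)*(y - 4)/(12*y) < (x - 3)*(x - 4)/(12*x) := by
    rw [div_lt_div_iff₀ (by linarith) (by linarith)]
    nlinarith [mul_pos (sub_pos.2 hxy) (show (0:ℝ) < 12 - x*y by nlinarith)]
  have hry : (0:ℝ) < (2:ℝ) ^ (-y) := Real.rpow_pos_of_pos (by norm_num) _
  have hrxy : (2:ℝ) ^ (-y) < (2:ℝ) ^ (-x) := by
    apply Real.rpow_lt_rpow_left_iff (by norm_num : (1:ℝ) < 2) |>.2
    linarith
  unfold h₁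
  nlinarith [mul_lt_mul' hfxy.le hrxy hry.le (lt_of_lt_of_le hfy (le_of_lt hfxy)),
    mul_lt_mul_of_pos_right hfxy hry]

theorem h₁_zero : StrictAntiOn h₁ (Set.Icc 1 2) ∧
    ∃ x ∈ Set.Icc (1:ℝ) 2, h₁ x = 0 ∧ x ∈ Set.Ioo (1.55:ℝ) 1.56 ∧
      ∀ y ∈ Set.Icc (1:ℝ) 2, h₁ y = 0 → y = x := by
  have hc : ContinuousOn h₁ (Set.Icc (1.55:ℝ) 1.56) := by
    unfold h₁
    apply ContinuousOn.sub
    · apply ContinuousOn.mul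
      · exact ContinuousOn.div (by fun_prop) (by fun_prop)
          (fun x hx => by have := hx.1; norm_num at this ⊢; linarith)
      · apply Continuous.continuousOn
        exact Continuous.rpow continuous_const continuous_neg (fun x => Or.inl (by norm_num))
    · fun_prop
  have hsub : Set.Icc (1.55:ℝ) 1.56 ⊆ Set.Icc 1 2 := by
    apply Set.Icc_subset_Icc <;> norm_num
  have hiv := intermediate_value_Icc' (by norm_num : (1.55:ℝ) ≤ 1.56) hc
  have h0 : (0:ℝ) ∈ Set.Icc (h₁ 1.56) (h₁ 1.55) := ⟨h156.le, h155.le⟩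
  obtain ⟨x, hxI, hx0⟩ := hiv h0
  refine ⟨h₁_anti, x, hsub hxI, hx0, ⟨?_, ?_⟩, ?_⟩
  · rcases lt_or_eq_of_le hxI.1 with h | h
    · exact h
    · exfalso; rw [← h] at hx0; exact h155.ne' hx0
  · rcases lt_or_eq_of_le hxI.2 with h | h
    · exact h
    · exfalso; rw [h] at hx0; exact h156.ne hx0
  · intro y hy hy0
    exact h₁_anti.injOn hy (hsub hxI) (hy0.trans hx0.symm)
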